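/- Let H be an equationally noetherian group. Then there are at most countably many isomorphism classes of finitely generated groups satisfying the universal theory of H (i.e., finitely generated H-limit groups). -/

import Mathlib

open FirstOrder FirstOrder.Language Cardinal

namespace Paper

variable (L : FirstOrder.Language.{0, 0})

/-- A tuple `a` generates `M`: every element is the value of a term at `a`. -/
def Generates {M : Type*} [L.Structure M] {n : ℕ} (a : Fin n → M) : Prop :=
  ∀ y : M, ∃ t : L.Term (Fin n), t.realize a = y

/-- A type over the language `L(c₁,…,cₙ)` in `k` free variables, represented as a set of
`L`-formulas in variables `Fin n ⊕ Fin k` (the first block playing the role of the constants). -/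
def NType (n : ℕ) : Type := Σ k : ℕ, Set (L.Formula (Fin n ⊕ Fin k))

variable {L}

/-- The pair `(M, a)` realizes the type `p` (in the language with the constants interpreted
as `a`). -/
def RealizesNType {M : Type*} [L.Structure M] {n : ℕ} (a : Fin n → M) (p : NType L n) : Prop :=
  ∃ v : Fin p.1 → M, ∀ φ ∈ p.2, φ.Realize (Sum.elim a v)

variable (L) in
/-- The type `pₙ(y) = { y ≠ τ(c̄) | τ an L-term }`. -/
def pType (n : ℕ) : NType L n :=
  ⟨1, { φ | ∃ t : L.Term (Fin n),
    φ = (Term.equal (t.relabel Sum.inl) (Term.var (Sum.inr 0))).not }⟩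

/-- The complete type `p_ā(M)` of a tuple, viewed as a set of sentences of `L(c̄)`. -/
def ctype {M : Type*} [L.Structure M] {n : ℕ} (a : Fin n → M) : NType L n :=
  ⟨0, { φ | ∃ ψ : L.Formula (Fin n), ψ.Realize a ∧ φ = ψ.relabel Sum.inl }⟩

/-- A type (in the language with constants) is supported over a class `K` of models-with-tuples
if some formula, satisfiable in `K`, forces realization of the type throughout `K`. -/
def Supported {T : L.Theory} {n : ℕ} (K : Set (Σ M : Theory.ModelType.{0, 0, 0} T, Fin n → M))
    (p : NType L n) : Prop :=
  ∃ φ : L.Formula (Fin n ⊕ Fin p.1),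
    (∃ P ∈ K, ∃ v : Fin p.1 → P.1, φ.Realize (Sum.elim P.2 v)) ∧
    ∀ P ∈ K, ∀ v : Fin p.1 → P.1, φ.Realize (Sum.elim P.2 v) →
      ∀ ψ ∈ p.2, ψ.Realize (Sum.elim P.2 v)

/-- `rk`: `RankEq T n α M` means the `n`-rank of `M` is `α`. Defined by transfinite
recursion: the rank is `α ≥ 1` iff for every generating `n`-tuple `ā`, `p_ā(M)` is
supported over the class of models (with generating tuple) of `T` omitting `pₙ` and the
complete types of all models of smaller rank. -/
def RankEq (T : L.Theory) (n : ℕ) : Ordinal.{0} → Theory.ModelType.{0, 0, 0} T → Prop :=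
  Ordinal.lt_wf.fix fun α ih M =>
    1 ≤ α ∧ (∃ a : Fin n → M, Generates L a) ∧
      ∀ a : Fin n → M, Generates L a →
        Supported
          { P : Σ N : T.ModelType, Fin n → N |
            ¬ RealizesNType (L := L) P.2 (pType L n) ∧
            ∀ β : Ordinal, (h : β < α) → ∀ N : T.ModelType, ih β h N →
              ∀ b : Fin n → N, Generates L b → ¬ RealizesNType (L := L) P.2 (ctype (L := L) b) }
          (ctype a)

/-- The class `K(T|P_{n,α})`: models of `T` with a distinguished `n`-tuple, omitting `pₙ`
(equivalently, generated by the tuple) and omitting the complete type of every `n`-generated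
model of `T` of rank `< α`. -/
def Kclass (T : L.Theory) (n : ℕ) (α : Ordinal.{0}) :
    Set (Σ M : Theory.ModelType.{0, 0, 0} T, Fin n → M) :=
  { P | ¬ RealizesNType (L := L) P.2 (pType L n) ∧
    ∀ β : Ordinal, β < α → ∀ N : T.ModelType, RankEq T n β N →
      ∀ b : Fin n → N, Generates L b → ¬ RealizesNType (L := L) P.2 (ctype (L := L) b) }

variable (L) in
/-- `n`-generated models of `T` (with countable carrier). -/
abbrev NGenModel (T : L.Theory) (n : ℕ) : Type 1 :=
  { M : Theory.ModelType.{0, 0, 0} T // ∃ a : Fin n → M, Generates L a }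

instance isoSetoid {T : L.Theory} {n : ℕ} : Setoid (NGenModel L T n) where
  r M N := Nonempty (M.1 ≃[L] N.1)
  iseqv := ⟨fun M => ⟨FirstOrder.Language.Equiv.refl L M.1⟩, fun ⟨e⟩ => ⟨e.symm⟩, fun ⟨e⟩ ⟨f⟩ => ⟨FirstOrder.Language.Equiv.comp f e⟩⟩

variable (L) in
/-- `α_n(T)`: the number of isomorphism classes of `n`-generated models of `T`. -/
def alphaCard (T : L.Theory) (n : ℕ) : Cardinal.{1} :=
  Cardinal.mk (Quotient (isoSetoid (L := L) (T := T) (n := n)))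

variable (L) in
/-- `T` is `n`-consistent: it has an `n`-generated model. -/
def NConsistent (T : L.Theory) (n : ℕ) : Prop :=
  ∃ M : Theory.ModelType.{0, 0, 0} T, ∃ a : Fin n → M, Generates L a


/-! ### Universal / existential formulas, ∀∃ theories -/

variable (L) in
/-- A universal formula: universal quantifiers over a quantifier-free formula. -/
def IsUniversalFormula {α : Type} (φ : L.Formula α) : Prop :=
  ∃ (k : ℕ) (ψ : L.BoundedFormula α k), ψ.IsQF ∧ φ = ψ.alls

variable (L) in
/-- An existential formula: existential quantifiers over a quantifier-free formula. -/
def IsExistentialFormula {α : Type} (φ : L.Formula α) : Prop :=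
  ∃ (k : ℕ) (ψ : L.BoundedFormula α k), ψ.IsQF ∧ φ = ψ.exs

/-- Iterated existential quantification of the last `k` bounded variables. -/
def exsTo {α : Type} : ∀ {m k : ℕ}, L.BoundedFormula α (m + k) → L.BoundedFormula α m
  | _, 0, φ => φ
  | _, _ + 1, φ => exsTo φ.ex

variable (L) in
/-- A `∀∃`-sentence: `∀ x̄ ∃ ȳ ψ` with `ψ` quantifier-free. -/
def IsAESentence (σ : L.Sentence) : Prop :=
  ∃ (m k : ℕ) (ψ : L.BoundedFormula Empty (m + k)), ψ.IsQF ∧ σ = (exsTo ψ).alls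

variable (L) in
/-- A `∀∃`-theory. -/
def IsAETheory (T : L.Theory) : Prop := ∀ σ ∈ T, IsAESentence L σ

/-- The universal type `p_{ā,∀}(M)` of a tuple: universal sentences of `L(c̄)` true of `ā`. -/
def utype {M : Type*} [L.Structure M] {n : ℕ} (a : Fin n → M) : NType L n :=
  ⟨0, { φ | ∃ ψ : L.Formula (Fin n),
    IsUniversalFormula L ψ ∧ ψ.Realize a ∧ φ = ψ.relabel Sum.inl }⟩

/-- A universal type is existentially supported over a class `K` if some existential formula,
satisfiable in `K`, forces its realization throughout `K`. -/
def ESupported {T : L.Theory} {n : ℕ} (K : Set (Σ M : Theory.ModelType.{0, 0, 0} T, Fin n → M))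
    (p : NType L n) : Prop :=
  ∃ φ : L.Formula (Fin n ⊕ Fin p.1), IsExistentialFormula L φ ∧
    (∃ P ∈ K, ∃ v : Fin p.1 → P.1, φ.Realize (Sum.elim P.2 v)) ∧
    ∀ P ∈ K, ∀ v : Fin p.1 → P.1, φ.Realize (Sum.elim P.2 v) →
      ∀ ψ ∈ p.2, ψ.Realize (Sum.elim P.2 v)

/-- `Rk`: the rank defined from universal types and existential supports. -/
def URankEq (T : L.Theory) (n : ℕ) : Ordinal.{0} → Theory.ModelType.{0, 0, 0} T → Prop :=
  Ordinal.lt_wf.fix fun α ih M =>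
    1 ≤ α ∧ (∃ a : Fin n → M, Generates L a) ∧
      ∀ a : Fin n → M, Generates L a →
        ESupported
          { P : Σ N : Theory.ModelType.{0, 0, 0} T, Fin n → N |
            ¬ RealizesNType (L := L) P.2 (pType L n) ∧
            ∀ β : Ordinal, (h : β < α) → ∀ N : Theory.ModelType.{0, 0, 0} T, ih β h N →
              ∀ b : Fin n → N, Generates L b → ¬ RealizesNType (L := L) P.2 (utype b) }
          (utype a)

/-- The class `K(T|Q_{n,α})` of the universal rank. -/
def UKclass (T : L.Theory) (n : ℕ) (α : Ordinal.{0}) :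
    Set (Σ M : Theory.ModelType.{0, 0, 0} T, Fin n → M) :=
  { P | ¬ RealizesNType (L := L) P.2 (pType L n) ∧
    ∀ β : Ordinal, β < α → ∀ N : Theory.ModelType.{0, 0, 0} T, URankEq T n β N →
      ∀ b : Fin n → N, Generates L b → ¬ RealizesNType (L := L) P.2 (utype b) }

/-! ### Types in finitely many variables, classes of models, omitting types -/

variable (L) in
/-- A type in finitely many variables. -/
def MType : Type := Σ k : ℕ, Set (L.Formula (Fin k))

variable (L) in
/-- A type all of whose formulas are universal. -/
def IsUniversalMType (p : MType L) : Prop := ∀ φ ∈ p.2, IsUniversalFormula L φ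

/-- A model realizes a type if some tuple satisfies all of its formulas. -/
def MRealizes {T : L.Theory} (M : Theory.ModelType.{0, 0, 0} T) (p : MType L) : Prop :=
  ∃ v : Fin p.1 → M, ∀ φ ∈ p.2, φ.Realize v

/-- The class `K(T|P)` of models of `T` omitting every type in `P`. -/
def KTP (T : L.Theory) (P : Set (MType L)) : Set (Theory.ModelType.{0, 0, 0} T) :=
  { M | ∀ p ∈ P, ¬ MRealizes M p }

/-- A type is supported over a class `K` of models of `T`. -/
def MSupported {T : L.Theory} (K : Set (Theory.ModelType.{0, 0, 0} T)) (q : MType L) : Prop :=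
  ∃ φ : L.Formula (Fin q.1),
    (∃ M ∈ K, ∃ v : Fin q.1 → M, φ.Realize v) ∧
    ∀ M ∈ K, ∀ v : Fin q.1 → M, φ.Realize v → ∀ ψ ∈ q.2, ψ.Realize v

/-- A universal type is existentially supported over a class `K` of models of `T`. -/
def MESupported {T : L.Theory} (K : Set (Theory.ModelType.{0, 0, 0} T)) (q : MType L) : Prop :=
  ∃ φ : L.Formula (Fin q.1), IsExistentialFormula L φ ∧
    (∃ M ∈ K, ∃ v : Fin q.1 → M, φ.Realize v) ∧
    ∀ M ∈ K, ∀ v : Fin q.1 → M, φ.Realize v → ∀ ψ ∈ q.2, ψ.Realize v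


/-! ### Groups -/

/-- The function symbols of the language of groups. -/
inductive GroupFunc : ℕ → Type
  | mul : GroupFunc 2
  | inv : GroupFunc 1
  | one : GroupFunc 0

/-- The first-order language of groups. -/
def grpLang : FirstOrder.Language.{0, 0} := ⟨GroupFunc, fun _ => Empty⟩

/-- Any group is a `grpLang`-structure. -/
instance grpStructure (G : Type*) [Group G] : grpLang.Structure G where
  funMap {n} f v :=
    match f with
    | .mul => v 0 * v 1
    | .inv => (v 0)⁻¹
    | .one => 1
  RelMap {n} r := r.elim

/-- The universal theory `Th_∀(H)` of a group `H`. -/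
def uTheoryOf (H : Type*) [Group H] : grpLang.Theory :=
  { σ | IsUniversalFormula grpLang σ ∧ H ⊨ σ }

/-- The algebraic set `V(S)` defined by a set `S ⊆ H ∗ F(x₁,…,xₙ)` of equations. -/
def Vset {H : Type} [Group H] {n : ℕ} (S : Set (Monoid.Coprod H (FreeGroup (Fin n)))) :
    Set (Fin n → H) :=
  { g | ∀ s ∈ S, Monoid.Coprod.lift (MonoidHom.id H) (FreeGroup.lift g) s = 1 }

/-- A group `H` is equationally noetherian if every algebraic set over `H` is defined by a
finite subsystem. -/
def EquationallyNoetherian (H : Type) [Group H] : Prop :=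
  ∀ (n : ℕ) (S : Set (Monoid.Coprod H (FreeGroup (Fin n)))),
    ∃ S₀ ⊆ S, S₀.Finite ∧ Vset S = Vset S₀

/-- Bundled finitely generated `H`-limit groups (with countable-universe carrier):
finitely generated groups satisfying the universal theory of `H`. -/
def LimitGroup (H : Type) [Group H] : Type 1 :=
  { G : GrpCat.{0} // Group.FG G ∧ (G : Type) ⊨ uTheoryOf H }

instance limitGroupSetoid {H : Type} [Group H] : Setoid (LimitGroup H) where
  r A B := Nonempty ((A.1 : Type) ≃* (B.1 : Type))
  iseqv := ⟨fun A => ⟨MulEquiv.refl _⟩, fun ⟨e⟩ => ⟨e.symm⟩, fun ⟨e⟩ ⟨f⟩ => ⟨e.trans f⟩⟩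

/-- `GRank H G γ` : the group `G`, as a model of `Th_∀(H)`, has universal rank `Rk(G) = γ`
(with respect to some tuple-length). -/
def GRank (H : Type) [Group H] (G : Type) [Group G] (hmod : G ⊨ uTheoryOf H)
    (γ : Ordinal.{0}) : Prop :=
  ∃ n : ℕ, URankEq (uTheoryOf H) n γ
    (@Theory.ModelType.of grpLang (uTheoryOf H) G _ hmod One.instNonempty)

/-- `G` is `H`-determined: some finite set `X ⊆ G \ {1}` is such that every homomorphism
from `G` to an `H`-limit group killing no element of `X` is injective. -/
def HDetermined (H : Type) [Group H] (G : Type) [Group G] : Prop :=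
  ∃ X : Finset G, (1 : G) ∉ X ∧
    ∀ (L' : Type) [Group L'], Group.FG L' → (L' ⊨ uTheoryOf H) →
      ∀ f : G →* L', (∀ x ∈ X, f x ≠ 1) → Function.Injective f

end Paper

/-
Present a finitely generated `H`-limit group `G` as `F(x̄)/N` with `N` the kernel of
`x̄ ↦ ḡ`. Since `H` is equationally noetherian, `N` contains a finite system `S` with the
same solutions in `H` as `N`. Every word `w` vanishing on all solutions of `S` in `H` gives a
universal sentence `∀ x̄, (⋀ S = 1) → w = 1` true in `H`, hence in `G`, hence `w(ḡ) = 1`.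
Thus `N` is the radical of `S` over `H`, and `G ≅ F(x̄)/Rad_H(S)` is determined by the
countable datum `(n, S)`.
-/

namespace FirstOrder.Language.BoundedFormula.IsQF

variable {L : Language} {α β : Type*} {n : ℕ}

theorem iInf [Finite β] {f : β → L.BoundedFormula α n} (hf : ∀ b, (f b).IsQF) :
    (BoundedFormula.iInf f).IsQF := by
  let _ := Fintype.ofFinite β
  simp only [BoundedFormula.iInf]
  induction (Finset.univ : Finset β).toList with
  | nil => exact IsQF.top
  | cons b l ih => exact (hf b).inf ih

end FirstOrder.Language.BoundedFormula.IsQF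

namespace Paper

section Terms

variable {α : Type} {M : Type*} [Group M]

def oneTerm : grpLang.Term α := Term.func GroupFunc.one ![]

def invTerm (t : grpLang.Term α) : grpLang.Term α := Term.func GroupFunc.inv ![t]

def mulTerm (s t : grpLang.Term α) : grpLang.Term α := Term.func GroupFunc.mul ![s, t]

@[simp] lemma realize_oneTerm (v : α → M) : (oneTerm : grpLang.Term α).realize v = 1 := rfl

@[simp] lemma realize_invTerm (v : α → M) (t : grpLang.Term α) :
    (invTerm t).realize v = (t.realize v)⁻¹ := rfl

@[simp] lemma realize_mulTerm (v : α → M) (s t : grpLang.Term α) :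
    (mulTerm s t).realize v = s.realize v * t.realize v := rfl

def listTerm : List (α × Bool) → grpLang.Term α
  | [] => oneTerm
  | (a, b) :: l => mulTerm (cond b (Term.var a) (invTerm (Term.var a))) (listTerm l)

lemma realize_listTerm (v : α → M) (l : List (α × Bool)) :
    (listTerm l).realize v = (l.map fun x => cond x.2 (v x.1) (v x.1)⁻¹).prod := by
  induction l with
  | nil => rfl
  | cons x l ih =>
    obtain ⟨a, _ | _⟩ := x <;> simp [listTerm, ih]

def wordTerm [DecidableEq α] (w : FreeGroup α) : grpLang.Term α := listTerm w.toWord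

@[simp] lemma realize_wordTerm [DecidableEq α] (v : α → M) (w : FreeGroup α) :
    (wordTerm w).realize v = FreeGroup.lift v w := by
  conv_rhs => rw [← FreeGroup.mk_toWord (x := w)]
  rw [wordTerm, realize_listTerm, FreeGroup.lift_mk]

end Terms

section QuasiIdentity

variable {n : ℕ}

def wordEqOne (w : FreeGroup (Fin n)) : grpLang.BoundedFormula Empty n :=
  Term.bdEqual ((wordTerm w).relabel Sum.inr) oneTerm

@[simp] lemma realize_wordEqOne {M : Type*} [Group M] (v : Empty → M) (x : Fin n → M)
    (w : FreeGroup (Fin n)) :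
    (wordEqOne w).Realize v x ↔ FreeGroup.lift x w = 1 := by
  simp [wordEqOne, Term.realize_relabel, Sum.elim_comp_inr]

noncomputable def quasiIdentity (S : Finset (FreeGroup (Fin n))) (w : FreeGroup (Fin n)) :
    grpLang.Sentence :=
  ((BoundedFormula.iInf fun s : S => wordEqOne (s : FreeGroup (Fin n))).imp (wordEqOne w)).alls

lemma isUniversalFormula_quasiIdentity (S : Finset (FreeGroup (Fin n)))
    (w : FreeGroup (Fin n)) : IsUniversalFormula grpLang (quasiIdentity S w) :=
  ⟨n, _, (BoundedFormula.IsQF.iInf fun _ => (BoundedFormula.IsAtomic.equal _ _).isQF).imp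
    (BoundedFormula.IsAtomic.equal _ _).isQF, rfl⟩

lemma realize_quasiIdentity {M : Type*} [Group M] (S : Finset (FreeGroup (Fin n)))
    (w : FreeGroup (Fin n)) :
    M ⊨ quasiIdentity S w ↔
      ∀ x : Fin n → M, (∀ s ∈ S, FreeGroup.lift x s = 1) → FreeGroup.lift x w = 1 := by
  refine BoundedFormula.realize_alls.trans (forall_congr' fun x => ?_)
  simp

end QuasiIdentity

section Radical

variable (H : Type) [Group H] {α : Type}

/-- `Rad_H(S)`: the words vanishing at every solution of the system `S` in `H`. -/
def radical (S : Set (FreeGroup α)) : Subgroup (FreeGroup α) :=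
  ⨅ h : { h : α → H // ∀ s ∈ S, FreeGroup.lift h s = 1 }, (FreeGroup.lift h.1).ker

variable {H}

lemma mem_radical {S : Set (FreeGroup α)} {w : FreeGroup α} :
    w ∈ radical H S ↔
      ∀ h : α → H, (∀ s ∈ S, FreeGroup.lift h s = 1) → FreeGroup.lift h w = 1 := by
  simp [radical, Subgroup.mem_iInf, MonoidHom.mem_ker]

lemma subset_radical (S : Set (FreeGroup α)) : S ⊆ radical H S :=
  fun w hw => mem_radical.mpr fun _ hh => hh w hw

lemma mem_Vset_image_inr {n : ℕ} (N : Set (FreeGroup (Fin n))) (h : Fin n → H) :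
    h ∈ Vset ((Monoid.Coprod.inr : FreeGroup (Fin n) →* _) '' N) ↔
      ∀ u ∈ N, FreeGroup.lift h u = 1 := by
  simp [Vset, Monoid.Coprod.lift_apply_inr]

lemma EquationallyNoetherian.exists_finset_radical_eq (hH : EquationallyNoetherian H) {n : ℕ}
    (N : Set (FreeGroup (Fin n))) :
    ∃ S : Finset (FreeGroup (Fin n)), ↑S ⊆ N ∧ radical H S = radical H N := by
  obtain ⟨S₀, hS₀N, hS₀, hV⟩ := hH n ((Monoid.Coprod.inr : FreeGroup (Fin n) →* _) '' N)
  obtain ⟨T, hTN, rfl⟩ := Set.subset_image_iff.mp hS₀N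
  have hT : T.Finite := hS₀.of_finite_image Monoid.Coprod.inr_injective.injOn
  have hsol : ∀ h : Fin n → H,
      (∀ s ∈ T, FreeGroup.lift h s = 1) ↔ ∀ u ∈ N, FreeGroup.lift h u = 1 := fun h => by
    rw [← mem_Vset_image_inr, ← mem_Vset_image_inr, hV]
  refine ⟨hT.toFinset, by simpa using hTN, ?_⟩
  ext w
  simp only [mem_radical, Set.Finite.coe_toFinset, hsol]

lemma radical_le_ker_lift {G : Type} [Group G] (hG : G ⊨ uTheoryOf H) {n : ℕ}
    {S : Finset (FreeGroup (Fin n))} {g : Fin n → G}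
    (hS : (S : Set (FreeGroup (Fin n))) ⊆ (FreeGroup.lift g).ker) :
    radical H S ≤ (FreeGroup.lift g).ker := by
  intro w hw
  have hH : H ⊨ quasiIdentity S w :=
    (realize_quasiIdentity S w).mpr fun h hh => mem_radical.mp hw h hh
  have hG : G ⊨ quasiIdentity S w :=
    hG.realize_of_mem _ ⟨isUniversalFormula_quasiIdentity S w, hH⟩
  exact (realize_quasiIdentity S w).mp hG g hS

lemma ker_lift_eq_radical (hH : EquationallyNoetherian H) {G : Type} [Group G]
    (hG : G ⊨ uTheoryOf H) {n : ℕ} (g : Fin n → G) :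
    ∃ S : Finset (FreeGroup (Fin n)), (FreeGroup.lift g).ker = radical H S := by
  obtain ⟨S, hSN, hrad⟩ :=
    hH.exists_finset_radical_eq ((FreeGroup.lift g).ker : Set (FreeGroup (Fin n)))
  refine ⟨S, le_antisymm ?_ (radical_le_ker_lift hG hSN)⟩
  rw [hrad]
  exact subset_radical _

end Radical

lemma exists_lift_surjective_of_fg {G : Type*} [Group G] (hG : Group.FG G) :
    ∃ (n : ℕ) (g : Fin n → G), Function.Surjective (FreeGroup.lift g) := by
  obtain ⟨S, hS⟩ := hG.out
  refine ⟨S.card, fun i => S.equivFin.symm i, ?_⟩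
  rw [← MonoidHom.range_eq_top, FreeGroup.range_lift_eq_closure, ← hS]
  congr
  exact (EquivLike.range_comp Subtype.val S.equivFin.symm).trans Subtype.range_coe

lemma nonempty_mulEquiv_of_ker_eq {F G G' : Type*} [Group F] [Group G] [Group G']
    {f : F →* G} {f' : F →* G'} (hf : Function.Surjective f) (hf' : Function.Surjective f')
    (h : f.ker = f'.ker) : Nonempty (G ≃* G') :=
  ⟨(QuotientGroup.quotientKerEquivOfSurjective f hf).symm.trans
    ((QuotientGroup.quotientMulEquivOfEq h).trans
      (QuotientGroup.quotientKerEquivOfSurjective f' hf'))⟩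

lemma LimitGroup.exists_radical_presentation {H : Type} [Group H]
    (hH : EquationallyNoetherian H) (G : LimitGroup H) :
    ∃ d : Σ n : ℕ, Finset (FreeGroup (Fin n)), ∃ g : Fin d.1 → G.1,
      Function.Surjective (FreeGroup.lift g) ∧ (FreeGroup.lift g).ker = radical H d.2 := by
  obtain ⟨n, g, hg⟩ := exists_lift_surjective_of_fg G.2.1
  obtain ⟨S, hS⟩ := ker_lift_eq_radical hH G.2.2 g
  exact ⟨⟨n, S⟩, g, hg, hS⟩

end Paper

/-- An equationally noetherian group `H` has at most countably many
finitely generated limit groups, up to isomorphism. -/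
theorem stmt_16 (H : Type) [Group H] (hH : Paper.EquationallyNoetherian H) :
    Cardinal.mk (Quotient (Paper.limitGroupSetoid (H := H))) ≤ Cardinal.aleph0 := by
  choose d hd using Paper.LimitGroup.exists_radical_presentation hH
  have hiso : ∀ G G' : Paper.LimitGroup H, d G = d G' → G ≈ G' := by
    intro G G' h
    obtain ⟨g, hg, hker⟩ := h ▸ hd G
    obtain ⟨g', hg', hker'⟩ := hd G'
    exact Paper.nonempty_mulEquiv_of_ker_eq hg hg' (hker.trans hker'.symm)
  rw [Cardinal.mk_le_aleph0_iff]
  refine Function.Injective.countable (f := fun q => d q.out) fun q q' h => ?_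
  rw [← q.out_eq, ← q'.out_eq]
  exact Quotient.sound (hiso _ _ h)
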